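/- arXiv:2210.02700 — 4 statements merged into one kernel-verified Lean document; each statement's English description precedes it below -/
import Mathlib

section
/- Assume: (1°) G Ē = 0; (2°) for every s ∈ ℂ the complexified (n+m)×n stacked matrix [s I_n − G Ā; C̄] has rank n, where Ā = A − E F⁺ C; and rank C̄ < n. Then rank [C F] > rank [E; F], where [C F] is the m×(n+q) augmented matrix and [E; F] is the (n+m)×q stacked matrix. Equivalently, rank C̄ > rank Ē. -/
/-!
From `G Ē = 0` we get `Ē = Ē (C̄Ē)⁺ C̄ Ē`, so `rank Ē ≤ rank C̄Ē ≤ rank C̄`. Equality throughout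
would force `range C̄Ē = range C̄`, hence `C̄ G = 0`. Then `ker C̄`, which is nonzero because
`rank C̄ < n`, is invariant under `G Ā` and so contains a complex eigenvector of `G Ā`, against the
PBH rank condition. Finally `rank [E; F] ≤ rank Ē + rank F` and `rank [C F] ≥ rank C̄ + rank F`, the
latter because the projection `I - F F⁺` fixes `range C̄` and kills `range F`.
-/

open Matrix Module

namespace Matrix

variable {K : Type*} [Field K] {l m n o : Type*} [Fintype n]

theorem rank_add_le (A B : Matrix m n K) : (A + B).rank ≤ A.rank + B.rank := by
  have hle : LinearMap.range (A + B).mulVecLin ≤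
      LinearMap.range A.mulVecLin ⊔ LinearMap.range B.mulVecLin := by
    rw [mulVecLin_add]
    rintro _ ⟨v, rfl⟩
    exact Submodule.add_mem_sup ⟨v, rfl⟩ ⟨v, rfl⟩
  exact (Submodule.finrank_mono hle).trans (Submodule.finrank_add_le_finrank_add_finrank _ _)

theorem rank_fromRows_le [Fintype m] [Fintype l] (A : Matrix m n K) (B : Matrix l n K) :
    (fromRows A B).rank ≤ A.rank + B.rank := by
  classical
  have hsplit :
      fromRows A B = fromRows (1 : Matrix m m K) 0 * A + fromRows 0 (1 : Matrix l l K) * B := by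
    simp only [fromRows_mul, Matrix.one_mul, Matrix.zero_mul]
    ext (_ | _) _ <;> simp
  rw [hsplit]
  exact (rank_add_le _ _).trans (add_le_add (rank_mul_le_right _ _) (rank_mul_le_right _ _))

theorem range_mulVecLin_fromCols [Fintype o] (A : Matrix m n K) (B : Matrix m o K) :
    LinearMap.range (fromCols A B).mulVecLin =
      LinearMap.range A.mulVecLin ⊔ LinearMap.range B.mulVecLin := by
  apply le_antisymm
  · rintro _ ⟨v, rfl⟩
    rw [mulVecLin_apply, fromCols_mulVec]
    exact Submodule.add_mem_sup ⟨_, rfl⟩ ⟨_, rfl⟩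
  · refine sup_le ?_ ?_ <;> rintro _ ⟨v, rfl⟩
    · exact ⟨Sum.elim v 0, by simp⟩
    · exact ⟨Sum.elim 0 v, by simp⟩

theorem rank_fromCols_of_disjoint [Fintype o] {A : Matrix m n K} {B : Matrix m o K}
    (h : Disjoint (LinearMap.range A.mulVecLin) (LinearMap.range B.mulVecLin)) :
    (fromCols A B).rank = A.rank + B.rank := by
  have := Submodule.finrank_sup_add_finrank_inf_eq
    (LinearMap.range A.mulVecLin) (LinearMap.range B.mulVecLin)
  rw [h.eq_bot, finrank_bot, add_zero, ← range_mulVecLin_fromCols] at this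
  exact this

theorem rank_lt_card_width_iff (A : Matrix m n K) :
    A.rank < Fintype.card n ↔ ∃ v ≠ 0, A *ᵥ v = 0 := by
  have h := LinearMap.finrank_range_add_finrank_ker A.mulVecLin
  rw [Module.finrank_fintype_fun_eq_card] at h
  have : A.rank < Fintype.card n ↔ LinearMap.ker A.mulVecLin ≠ ⊥ := by
    rw [Ne, ← Submodule.finrank_eq_zero]
    change finrank K (LinearMap.range A.mulVecLin) < _ ↔ _
    omega
  rw [this, Submodule.ne_bot_iff]
  simp only [LinearMap.mem_ker, mulVecLin_apply]
  tauto

theorem rank_map_lt_card_width {L : Type*} [Field L] (f : K →+* L) {A : Matrix m n K}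
    (hA : A.rank < Fintype.card n) : (A.map f).rank < Fintype.card n := by
  obtain ⟨v, hv, hAv⟩ := (rank_lt_card_width_iff A).mp hA
  refine (rank_lt_card_width_iff _).mpr ⟨f ∘ v, ?_, ?_⟩
  · exact fun h => hv (funext fun i => f.injective (by simpa using congrFun h i))
  · funext i
    rw [← RingHom.map_mulVec, hAv, Pi.zero_apply, map_zero, Pi.zero_apply]

theorem rank_fromRows_le_rank_mul_one_sub_add [Fintype m] [Fintype o] [DecidableEq m]
    [DecidableEq n] [DecidableEq o] (E : Matrix m o K) (F : Matrix n o K) (Fp : Matrix o n K) :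
    (fromRows E F).rank ≤ (E * (1 - Fp * F)).rank + F.rank := by
  have hrows : fromRows E F =
      (fromBlocks 1 (E * Fp) 0 1 : Matrix (m ⊕ n) (m ⊕ n) K) * fromRows (E * (1 - Fp * F)) F := by
    rw [fromBlocks_mul_fromRows]
    simp only [Matrix.one_mul, Matrix.zero_mul, sub_zero, zero_add, Matrix.mul_sub,
      Matrix.mul_one, Matrix.mul_assoc, sub_add_cancel]
  rw [hrows]
  exact (rank_mul_le_right _ _).trans (rank_fromRows_le _ _)

theorem rank_mul_add_rank_le_rank_fromCols [Fintype m] [Fintype o] [DecidableEq m]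
    [DecidableEq n] [DecidableEq o] (C : Matrix m n K) {F : Matrix m o K} {Fp : Matrix o m K}
    (hF : F * Fp * F = F) : ((1 - F * Fp) * C).rank + F.rank ≤ (fromCols C F).rank := by
  have hdisj : Disjoint (LinearMap.range ((1 - F * Fp) * C).mulVecLin)
      (LinearMap.range F.mulVecLin) := by
    rw [Submodule.disjoint_def]
    rintro _ ⟨u, rfl⟩ ⟨w, hw⟩
    simp only [mulVecLin_apply] at hw ⊢
    have hPF : (1 - F * Fp) * F = 0 := by rw [Matrix.sub_mul, Matrix.one_mul, hF, sub_self]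
    have hPP : (1 - F * Fp) * (1 - F * Fp) = 1 - F * Fp := by
      rw [Matrix.mul_sub, Matrix.mul_one, Matrix.sub_mul, Matrix.one_mul, ← Matrix.mul_assoc, hF,
        sub_self, sub_zero]
    calc ((1 - F * Fp) * C) *ᵥ u = (1 - F * Fp) *ᵥ (((1 - F * Fp) * C) *ᵥ u) := by
          rw [mulVec_mulVec, ← Matrix.mul_assoc, hPP]
      _ = 0 := by rw [← hw, mulVec_mulVec, hPF, zero_mulVec]
  have hcols : fromCols ((1 - F * Fp) * C) F =
      fromCols C F * (fromBlocks 1 0 (-(Fp * C)) 1 : Matrix (n ⊕ o) (n ⊕ o) K) := by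
    rw [fromCols_mul_fromBlocks]
    simp only [Matrix.mul_one, Matrix.mul_zero, zero_add, Matrix.mul_neg, Matrix.sub_mul,
      Matrix.one_mul, Matrix.mul_assoc, ← sub_eq_add_neg]
  rw [← rank_fromCols_of_disjoint hdisj, hcols]
  exact rank_mul_le_left _ _

theorem exists_rank_fromRows_sub_lt [IsAlgClosed K] [DecidableEq n] (B : Matrix n n K)
    {C : Matrix m n K} (hB : ∀ v, C *ᵥ v = 0 → C *ᵥ (B *ᵥ v) = 0)
    (hC : C.rank < Fintype.card n) : ∃ s : K, (fromRows (s • 1 - B) C).rank < Fintype.card n := by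
  obtain ⟨v, hv, hCv⟩ := (rank_lt_card_width_iff C).mp hC
  let V := LinearMap.ker C.mulVecLin
  have : Nontrivial V := ⟨⟨⟨v, hCv⟩, 0, fun h => hv (congrArg Subtype.val h)⟩⟩
  obtain ⟨s, hs⟩ := Module.End.exists_eigenvalue (B.mulVecLin.restrict (p := V) (q := V) hB)
  obtain ⟨⟨x, hCx⟩, hx⟩ := hs.exists_hasEigenvector
  have hBx : B *ᵥ x = s • x := congrArg Subtype.val hx.apply_eq_smul
  refine ⟨s, (rank_lt_card_width_iff _).mpr ⟨x, fun h => hx.2 (Subtype.ext h), ?_⟩⟩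
  rw [fromRows_mulVec, sub_mulVec, smul_mulVec, one_mulVec, hBx, sub_self]
  ext (_ | _) <;> simp [show C *ᵥ x = 0 from hCx]

theorem mul_mul_mul_eq_self_of_rank_mul_eq [Fintype m] [Fintype o] {C : Matrix m n K}
    {E : Matrix n o K} (X : Matrix o m K) (hE : E * X * (C * E) = E)
    (hrank : (C * E).rank = C.rank) : C * E * X * C = C := by
  have hrange : LinearMap.range (C * E).mulVecLin = LinearMap.range C.mulVecLin := by
    refine Submodule.eq_of_le_of_finrank_le ?_ hrank.ge
    rw [mulVecLin_mul]
    exact LinearMap.range_comp_le_range _ _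
  rw [ext_iff_mulVec]
  intro v
  obtain ⟨u, hu⟩ : C *ᵥ v ∈ LinearMap.range (C * E).mulVecLin := hrange ▸ ⟨v, rfl⟩
  rw [mulVecLin_apply] at hu
  calc (C * E * X * C) *ᵥ v = (C * E * X) *ᵥ ((C * E) *ᵥ u) := by rw [← mulVec_mulVec, hu]
    _ = (C * (E * X * (C * E))) *ᵥ u := by simp only [mulVec_mulVec, Matrix.mul_assoc]
    _ = C *ᵥ v := by rw [hE, hu]

theorem rank_lt_rank_of_mul_mul_mul_ne [Fintype m] [Fintype o] {C : Matrix m n K}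
    {E : Matrix n o K} {X : Matrix o m K} (hE : E * X * (C * E) = E)
    (hne : C * E * X * C ≠ C) : E.rank < C.rank := by
  have hEle : E.rank ≤ (C * E).rank := by
    calc E.rank = (E * X * (C * E)).rank := by rw [hE]
      _ ≤ (C * E).rank := rank_mul_le_right _ _
  refine lt_of_le_of_ne (hEle.trans (rank_mul_le_left _ _)) fun heq => hne ?_
  exact mul_mul_mul_eq_self_of_rank_mul_eq X hE
    (le_antisymm (rank_mul_le_left _ _) (heq ▸ hEle))

end Matrix

theorem stmt7_general {n m q : ℕ}
    (C : Matrix (Fin m) (Fin n) ℝ)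
    (E : Matrix (Fin n) (Fin q) ℝ) (F : Matrix (Fin m) (Fin q) ℝ)
    (Fp : Matrix (Fin q) (Fin m) ℝ)
    (hFp1 : F * Fp * F = F)
    (Cbar : Matrix (Fin m) (Fin n) ℝ)
    (hCbar : Cbar = ((1 : Matrix (Fin m) (Fin m) ℝ) - F * Fp) * C)
    (Ebar : Matrix (Fin n) (Fin q) ℝ)
    (hEbar : Ebar = E * ((1 : Matrix (Fin q) (Fin q) ℝ) - Fp * F))
    (CEp : Matrix (Fin q) (Fin m) ℝ)
    (G : Matrix (Fin n) (Fin n) ℝ)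
    (hG : G = (1 : Matrix (Fin n) (Fin n) ℝ) - Ebar * CEp * Cbar)
    (Abar : Matrix (Fin n) (Fin n) ℝ)
    (hGE : G * Ebar = 0)
    (hPBH : ∀ s : ℂ,
      (Matrix.fromRows (s • (1 : Matrix (Fin n) (Fin n) ℂ) - (G * Abar).map Complex.ofReal)
          (Cbar.map Complex.ofReal)).rank = n)
    (hCrank : Cbar.rank < n) :
    (Matrix.fromCols C F).rank > (Matrix.fromRows E F).rank ∧
      Cbar.rank > Ebar.rank := by
  have hE : Ebar * CEp * (Cbar * Ebar) = Ebar := by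
    rwa [hG, Matrix.sub_mul, Matrix.one_mul, sub_eq_zero, eq_comm, Matrix.mul_assoc _ Cbar] at hGE
  have hCG : Cbar * Ebar * CEp * Cbar ≠ Cbar := by
    intro hCG
    have hCGA : Cbar * (G * Abar) = 0 := by
      rw [← Matrix.mul_assoc, hG, Matrix.mul_sub, Matrix.mul_one, ← Matrix.mul_assoc,
        ← Matrix.mul_assoc, hCG, sub_self, Matrix.zero_mul]
    have hinv : ∀ v, Cbar.map Complex.ofReal *ᵥ v = 0 →
        Cbar.map Complex.ofReal *ᵥ ((G * Abar).map Complex.ofReal *ᵥ v) = 0 := by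
      intro v _
      have hmap : Cbar.map Complex.ofReal * (G * Abar).map Complex.ofReal =
          (Cbar * (G * Abar)).map Complex.ofRealHom :=
        (Matrix.map_mul (L := Cbar) (M := G * Abar) (f := Complex.ofRealHom)).symm
      rw [mulVec_mulVec, hmap, hCGA, Matrix.map_zero _ (map_zero _), zero_mulVec]
    obtain ⟨s, hs⟩ := exists_rank_fromRows_sub_lt _ hinv
      (rank_map_lt_card_width Complex.ofRealHom (by simpa using hCrank))
    simp [hPBH s] at hs
  have hrank : Ebar.rank < Cbar.rank := rank_lt_rank_of_mul_mul_mul_ne hE hCG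
  refine ⟨?_, hrank⟩
  calc (fromRows E F).rank ≤ Ebar.rank + F.rank :=
        hEbar ▸ rank_fromRows_le_rank_mul_one_sub_add E F Fp
    _ < Cbar.rank + F.rank := by omega
    _ ≤ (fromCols C F).rank := hCbar ▸ rank_mul_add_rank_le_rank_fromCols C hFp1

/-- Theorem 4: Under `G Ē = 0`, PBH observability of `(G Ā, C̄)` over `ℂ`,
and `rank C̄ < n`, one has `rank [C F] > rank [E; F]`, equivalently `rank C̄ > rank Ē`. -/
theorem stmt7 {n m q : ℕ}
    (A : Matrix (Fin n) (Fin n) ℝ) (C : Matrix (Fin m) (Fin n) ℝ)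
    (E : Matrix (Fin n) (Fin q) ℝ) (F : Matrix (Fin m) (Fin q) ℝ)
    (Fp : Matrix (Fin q) (Fin m) ℝ)
    (hFp1 : F * Fp * F = F) (hFp2 : Fp * F * Fp = Fp)
    (Cbar : Matrix (Fin m) (Fin n) ℝ)
    (hCbar : Cbar = ((1 : Matrix (Fin m) (Fin m) ℝ) - F * Fp) * C)
    (Ebar : Matrix (Fin n) (Fin q) ℝ)
    (hEbar : Ebar = E * ((1 : Matrix (Fin q) (Fin q) ℝ) - Fp * F))
    (CEp : Matrix (Fin q) (Fin m) ℝ)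
    (hCEp1 : (Cbar * Ebar) * CEp * (Cbar * Ebar) = Cbar * Ebar)
    (hCEp2 : CEp * (Cbar * Ebar) * CEp = CEp)
    (G : Matrix (Fin n) (Fin n) ℝ)
    (hG : G = (1 : Matrix (Fin n) (Fin n) ℝ) - Ebar * CEp * Cbar)
    (Abar : Matrix (Fin n) (Fin n) ℝ)
    (hAbar : Abar = A - E * Fp * C)
    (hGE : G * Ebar = 0)
    (hPBH : ∀ s : ℂ,
      (Matrix.fromRows (s • (1 : Matrix (Fin n) (Fin n) ℂ) - (G * Abar).map Complex.ofReal)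
          (Cbar.map Complex.ofReal)).rank = n)
    (hCrank : Cbar.rank < n) :
    (Matrix.fromCols C F).rank > (Matrix.fromRows E F).rank ∧
      Cbar.rank > Ebar.rank :=
  stmt7_general C E F Fp hFp1 Cbar hCbar Ebar hEbar CEp G hG Abar hGE hPBH hCrank
end

section
/- Let M₁, M₂ ∈ ℝ^{k×k} and σ < 0 be such that every complex eigenvalue of M₂ has real part < σ and every complex eigenvalue of M₁ has real part in (σ, 0), and let K ∈ ℝ^{k×k} be invertible. Then the set { τ ∈ (0, ∞) : det(K − exp(τ M₂) · K · exp(−τ M₁)) = 0 } has Lebesgue measure zero. -/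
/-!
The function `f τ = det (K - exp (τ M₂) K exp (-τ M₁))` is real analytic on `ℝ`, so its zero set
is discrete, hence countable and Lebesgue-null, unless `f` vanishes identically. It does not:
by Gelfand's formula `‖exp (M₂) ^ m‖` and `‖exp (-M₁) ^ m‖` grow at most like `r ^ m` and `s ^ m`
for any `r > e ^ σ` and `s > e ^ (-σ)`, so `exp (m M₂) K exp (-m M₁) → 0` along integers `m` and
`f m → det K ≠ 0`. The spectral radius of `exp N` is read off from `spec (exp N) ⊆ exp (spec N)`.
-/

open NormedSpace Polynomial Filter Topology MeasureTheory
open scoped NNReal ENNReal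

section BanachAlgebra

variable {A : Type*} [NormedRing A] [NormedAlgebra ℂ A] [CompleteSpace A]

theorem spectrum.eventually_nnnorm_pow_le {a : A} {r : ℝ≥0} (h : spectralRadius ℂ a < r) :
    ∀ᶠ n : ℕ in atTop, ‖a ^ n‖₊ ≤ r ^ n := by
  filter_upwards [(pow_nnnorm_pow_one_div_tendsto_nhds_spectralRadius a).eventually_lt_const h,
    eventually_ne_atTop 0] with n hn hn0
  rw [one_div] at hn
  have : (‖a ^ n‖₊ : ℝ≥0∞) ≤ (r : ℝ≥0∞) ^ n := by
    rw [← ENNReal.rpow_inv_natCast_pow hn0 (‖a ^ n‖₊ : ℝ≥0∞)]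
    exact pow_le_pow_left₀ zero_le hn.le n
  exact_mod_cast this

theorem tendsto_pow_mul_mul_pow_nhds_zero {a b : A} (c : A) {r s : ℝ≥0}
    (ha : spectralRadius ℂ a < r) (hb : spectralRadius ℂ b < s) (hrs : r * s ≤ 1) :
    Tendsto (fun n : ℕ => a ^ n * c * b ^ n) atTop (𝓝 0) := by
  obtain ⟨r', har', hr'⟩ := ENNReal.lt_iff_exists_nnreal_btwn.mp ha
  obtain ⟨s', hbs', hs'⟩ := ENNReal.lt_iff_exists_nnreal_btwn.mp hb
  have hlt : r' * s' < 1 :=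
    (mul_lt_mul'' (mod_cast hr') (mod_cast hs') zero_le zero_le).trans_le hrs
  have hbound : ∀ᶠ n : ℕ in atTop, ‖a ^ n * c * b ^ n‖ ≤ ‖c‖ * ((r' * s' : ℝ≥0) : ℝ) ^ n := by
    filter_upwards [spectrum.eventually_nnnorm_pow_le har',
      spectrum.eventually_nnnorm_pow_le hbs'] with n hna hnb
    calc ‖a ^ n * c * b ^ n‖ ≤ ‖a ^ n‖ * ‖c‖ * ‖b ^ n‖ := norm_mul₃_le
      _ ≤ r' ^ n * ‖c‖ * s' ^ n := by
        gcongr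
        · exact_mod_cast hna
        · exact_mod_cast hnb
      _ = ‖c‖ * ((r' * s' : ℝ≥0) : ℝ) ^ n := by push_cast; ring
  refine squeeze_zero_norm' hbound ?_
  simpa using (tendsto_pow_atTop_nhds_zero_of_lt_one (by positivity)
    (mod_cast hlt)).const_mul ‖c‖

end BanachAlgebra

namespace Matrix

variable {n : Type*} [Fintype n] [DecidableEq n]

theorem mem_spectrum_map_algebraMap_iff {K L : Type*} [Field K] [Field L] [Algebra K L]
    (M : Matrix n n K) (μ : L) :
    μ ∈ spectrum L (M.map (algebraMap K L)) ↔
      μ ∈ (M.charpoly.map (algebraMap K L)).roots := by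
  rw [mem_spectrum_iff_isRoot_charpoly, charpoly_map,
    mem_roots (M.charpoly_monic.map _).ne_zero]

theorem exp_mem_adjoin_singleton (N : Matrix n n ℂ) : exp N ∈ Algebra.adjoin ℂ {N} := by
  have hclosed : IsClosed (Algebra.adjoin ℂ {N} : Set (Matrix n n ℂ)) :=
    (Subalgebra.toSubmodule (Algebra.adjoin ℂ {N})).closed_of_finiteDimensional
  exact exp_mem (R := ℂ) hclosed (Algebra.self_mem_adjoin_singleton ℂ N)

-- Gelfand's formula needs a Banach algebra norm on matrices; any one will do, since all the
-- statements below only involve the topology.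
attribute [local instance] Matrix.linftyOpNormedRing Matrix.linftyOpNormedAlgebra

theorem exp_mulVec_of_mulVec_eq_smul {N : Matrix n n ℂ} {μ : ℂ} {v : n → ℂ}
    (h : N *ᵥ v = μ • v) : exp N *ᵥ v = Complex.exp μ • v := by
  have hpow (m : ℕ) : (N ^ m) *ᵥ v = μ ^ m • v := by
    simpa [← toLin'_pow] using
      Module.End.aeval_apply_of_mem_apply_eq_smul (f := toLin' N) (p := X ^ m) h
  let L : Matrix n n ℂ →+ (n → ℂ) := AddMonoidHom.mk' (· *ᵥ v) fun X Y => add_mulVec X Y v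
  have hN := (exp_series_hasSum_exp' (𝕂 := ℂ) N).map L
    (continuous_id.matrix_mulVec continuous_const)
  have hμ := (exp_series_hasSum_exp' (𝕂 := ℂ) μ).smul_const v
  simp only [Function.comp_def, L, AddMonoidHom.mk'_apply, smul_mulVec, hpow, smul_smul] at hN
  rw [← Complex.exp_eq_exp_ℂ] at hμ
  exact hN.unique (by simpa only [smul_eq_mul] using hμ)

theorem spectrum_exp_subset (N : Matrix n n ℂ) :
    spectrum ℂ (exp N) ⊆ Complex.exp '' spectrum ℂ N := by
  -- `exp N = p N` for a polynomial `p`; the spectral mapping theorem for `p` and an eigenvector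
  -- computation, which shows `p = exp` on the spectrum of `N`, give the inclusion.
  nontriviality Matrix n n ℂ
  obtain ⟨p, hp⟩ : ∃ p, aeval N p = exp N := by
    simpa [Algebra.adjoin_singleton_eq_range_aeval] using exp_mem_adjoin_singleton N
  rw [← hp, spectrum.map_polynomial_aeval_of_nonempty _ _
    (spectrum.nonempty_of_isAlgClosed_of_finiteDimensional ℂ N)]
  rintro _ ⟨μ, hμ, rfl⟩
  refine ⟨μ, hμ, ?_⟩
  obtain ⟨v, hv⟩ := (Module.End.hasEigenvalue_iff_mem_spectrum.mpr
    ((spectrum_toLin' N).symm ▸ hμ)).exists_hasEigenvector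
  have hNv : N *ᵥ v = μ • v := Module.End.mem_eigenspace_iff.mp hv.1
  refine smul_left_injective ℂ hv.2 (?_ : Complex.exp μ • v = p.eval μ • v)
  rw [← exp_mulVec_of_mulVec_eq_smul hNv, ← hp, ← Module.End.aeval_apply_of_hasEigenvector hv,
    ← toLinAlgEquiv'_apply, ← aeval_algHom_apply]
  rfl

theorem spectralRadius_exp_lt {N : Matrix n n ℂ} {s : ℝ} (h : ∀ μ ∈ spectrum ℂ N, μ.re < s) :
    spectralRadius ℂ (exp N) < ENNReal.ofReal (Real.exp s) := by
  rcases (spectrum ℂ (exp N)).eq_empty_or_nonempty with he | hne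
  · simpa [spectralRadius, he] using Real.exp_pos s
  refine spectrum.spectralRadius_lt_of_forall_lt_of_nonempty hne fun z hz => ?_
  obtain ⟨μ, hμ, rfl⟩ := spectrum_exp_subset N hz
  rw [← NNReal.coe_lt_coe, coe_nnnorm, Complex.norm_exp,
    Real.coe_toNNReal _ (Real.exp_pos s).le]
  exact Real.exp_lt_exp.mpr (h μ hμ)

theorem analyticAt_det {𝕜 : Type*} [NontriviallyNormedField 𝕜] (X : Matrix n n 𝕜) :
    AnalyticAt 𝕜 (det : Matrix n n 𝕜 → 𝕜) X := by
  simp only [_root_.funext det_apply']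
  refine Finset.analyticAt_fun_sum _ fun σ _ =>
    analyticAt_const.mul (Finset.analyticAt_fun_prod _ fun i _ => ?_)
  let entry : Matrix n n 𝕜 →L[𝕜] 𝕜 :=
    ⟨entryLinearMap 𝕜 𝕜 (σ i) i, continuous_id.matrix_elem (σ i) i⟩
  exact entry.analyticAt X

theorem analyticOnNhd_det_sub_exp_smul_mul_mul_exp_neg_smul (M1 M2 K : Matrix n n ℝ) :
    AnalyticOnNhd ℝ (fun τ : ℝ => (K - exp (τ • M2) * K * exp (-(τ • M1))).det) Set.univ :=
  fun _ _ => (analyticAt_det _).comp <| analyticAt_const.sub <|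
    (((exp_analytic _).comp (analyticAt_id.smul analyticAt_const)).mul analyticAt_const).mul
      ((exp_analytic _).comp (analyticAt_id.smul analyticAt_const).neg)

theorem tendsto_exp_pow_mul_mul_exp_neg_pow {M1 M2 : Matrix n n ℝ} (K : Matrix n n ℝ) {σ : ℝ}
    (hM2 : ∀ μ ∈ spectrum ℂ (M2.map (algebraMap ℝ ℂ)), μ.re < σ)
    (hM1 : ∀ ν ∈ spectrum ℂ (M1.map (algebraMap ℝ ℂ)), σ < ν.re) :
    Tendsto (fun m : ℕ => exp M2 ^ m * K * exp (-M1) ^ m) atTop (𝓝 0) := by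
  -- Gelfand's formula is about complex Banach algebras: complexify, then take real parts.
  let φ : Matrix n n ℝ →+* Matrix n n ℂ := (algebraMap ℝ ℂ).mapMatrix
  have hφ : Continuous φ := continuous_id.matrix_map (continuous_algebraMap ℝ ℂ)
  have hA : spectralRadius ℂ (exp (φ M2)) < ENNReal.ofReal (Real.exp σ) :=
    spectralRadius_exp_lt hM2
  have hB : spectralRadius ℂ (exp (φ (-M1))) < ENNReal.ofReal (Real.exp (-σ)) := by
    refine spectralRadius_exp_lt fun ν hν => ?_
    rw [map_neg, ← spectrum.neg_eq] at hν
    have := hM1 (-ν) hν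
    rw [Complex.neg_re] at this
    linarith
  have hrs : (Real.exp σ).toNNReal * (Real.exp (-σ)).toNNReal ≤ 1 := by
    rw [← Real.toNNReal_mul (Real.exp_pos σ).le, ← Real.exp_add, add_neg_cancel, Real.exp_zero,
      Real.toNNReal_one]
  have hC : Tendsto (fun m : ℕ => φ (exp M2 ^ m * K * exp (-M1) ^ m)) atTop (𝓝 0) := by
    have h2 : φ (exp M2) = exp (φ M2) := map_exp φ hφ M2
    have h1 : φ (exp (-M1)) = exp (φ (-M1)) := map_exp φ hφ (-M1)
    simp only [map_mul, map_pow, h1, h2]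
    exact tendsto_pow_mul_mul_pow_nhds_zero (φ K) hA hB hrs
  have hre : Continuous fun X : Matrix n n ℂ => X.map Complex.re :=
    continuous_id.matrix_map Complex.continuous_re
  simpa [φ, Function.comp_def, Matrix.map_map] using (hre.tendsto 0).comp hC

theorem tendsto_det_sub_exp_smul_mul_mul_exp_neg_smul {M1 M2 : Matrix n n ℝ} (K : Matrix n n ℝ)
    {σ : ℝ} (hM2 : ∀ μ ∈ spectrum ℂ (M2.map (algebraMap ℝ ℂ)), μ.re < σ)
    (hM1 : ∀ ν ∈ spectrum ℂ (M1.map (algebraMap ℝ ℂ)), σ < ν.re) :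
    Tendsto (fun m : ℕ => (K - exp ((m : ℝ) • M2) * K * exp (-((m : ℝ) • M1))).det) atTop
      (𝓝 K.det) := by
  have h := (continuous_id.matrix_det.tendsto _).comp
    ((tendsto_exp_pow_mul_mul_exp_neg_pow K hM2 hM1).const_sub K)
  simp only [sub_zero] at h
  refine h.congr fun m => ?_
  rw [Function.comp_apply, id, ← smul_neg, Nat.cast_smul_eq_nsmul, Nat.cast_smul_eq_nsmul,
    exp_nsmul, exp_nsmul]

end Matrix

theorem AnalyticOnNhd.measure_preimage_zero_eq_zero {E : Type*}
    [NormedAddCommGroup E] [NormedSpace ℝ E] {f : ℝ → E} (hf : AnalyticOnNhd ℝ f Set.univ)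
    (μ : Measure ℝ) [NullSingletonClass μ] {x : ℝ} (hx : f x ≠ 0) : μ (f ⁻¹' {0}) = 0 := by
  have := ae_restrict_le_codiscreteWithin (μ := μ) MeasurableSet.univ
    (hf.preimage_zero_mem_codiscrete hx)
  rwa [Measure.restrict_univ, mem_ae_iff, Set.preimage_compl, compl_compl] at this

theorem stmt14_general {k : ℕ} (M1 M2 K : Matrix (Fin k) (Fin k) ℝ) (σ : ℝ)
    (hM2 : ∀ μ ∈ (M2.charpoly.map (algebraMap ℝ ℂ)).roots, μ.re < σ)
    (hM1 : ∀ ν ∈ (M1.charpoly.map (algebraMap ℝ ℂ)).roots, σ < ν.re ∧ ν.re < 0)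
    (hK : IsUnit K) :
    MeasureTheory.volume
      {τ : ℝ | τ ∈ Set.Ioi (0 : ℝ) ∧
        (K - NormedSpace.exp (τ • M2) * K * NormedSpace.exp (-(τ • M1))).det = 0} = 0 := by
  have hdet := Matrix.tendsto_det_sub_exp_smul_mul_mul_exp_neg_smul K (σ := σ)
    (fun μ hμ => hM2 μ ((Matrix.mem_spectrum_map_algebraMap_iff M2 μ).mp hμ))
    (fun ν hν => (hM1 ν ((Matrix.mem_spectrum_map_algebraMap_iff M1 ν).mp hν)).1)
  obtain ⟨m, hm⟩ :=
    (hdet.eventually_ne ((Matrix.isUnit_iff_isUnit_det K).mp hK).ne_zero).exists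
  have hf := Matrix.analyticOnNhd_det_sub_exp_smul_mul_mul_exp_neg_smul M1 M2 K
  exact measure_mono_null (fun τ hτ => hτ.2) (hf.measure_preimage_zero_eq_zero volume hm)

/-- If every complex eigenvalue of `M₂` has real part `< σ`, every complex
eigenvalue of `M₁` has real part in `(σ, 0)` (with `σ < 0`), and `K` is invertible, then
`{τ ∈ (0,∞) : det(K − exp(τM₂) K exp(−τM₁)) = 0}` has Lebesgue measure zero. -/
theorem stmt14 {k : ℕ} (M1 M2 K : Matrix (Fin k) (Fin k) ℝ) (σ : ℝ) (hσ : σ < 0)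
    (hM2 : ∀ μ ∈ (M2.charpoly.map (algebraMap ℝ ℂ)).roots, μ.re < σ)
    (hM1 : ∀ ν ∈ (M1.charpoly.map (algebraMap ℝ ℂ)).roots, σ < ν.re ∧ ν.re < 0)
    (hK : IsUnit K) :
    MeasureTheory.volume
      {τ : ℝ | τ ∈ Set.Ioi (0 : ℝ) ∧
        (K - NormedSpace.exp (τ • M2) * K * NormedSpace.exp (-(τ • M1))).det = 0} = 0 :=
  stmt14_general M1 M2 K σ hM2 hM1 hK
end

section
/- Fix τ > 0. Let A ∈ ℝ^{n×n}, B ∈ ℝ^{n×p}, C ∈ ℝ^{m×n}, D ∈ ℝ^{m×p} with n > m. For i = 1, 2 let M_i ∈ ℝ^{(n−m)×(n−m)}, M̄_i ∈ ℝ^{m×m}, H_i ∈ ℝ^{(n−m)×m}, and T_i ∈ ℝ^{(n−m)×n} satisfy T_i A − M_i T_i = H_i C with [T_i; C] invertible; set U_i = [T_i; C]⁻¹ and M̂_i = diag(M_i, M̄_i) (n×n block-diagonal). Assume the 2n×2n matrix W = [[I_n, U₁ exp(τ M̂₁) U₁⁻¹],[I_n, U₂ exp(τ M̂₂) U₂⁻¹]]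 is invertible and set D_c = [I_n 0] W⁻¹. Let x : ℝ → ℝⁿ, u : ℝ → ℝᵖ, v₁, v₂ : ℝ → ℝ^{n−m} satisfy, for all t ≥ 0: x has derivative A x(t) + B u(t) at t, and v_i has derivative M_i v_i(t) + H_i y(t) + (T_i B − H_i D) u(t) at t, where y(t) := C x(t) + D u(t). Define φ(t) = (v₁(t); y(t) − D u(t); v₂(t); y(t) − D u(t)) ∈ ℝ^{2n} and x̂(t) = D_c · diag(U₁, U₂) · (φ(t) − exp(τ M̂) φ(t − τ)) where M̂ = diag(M̂₁, M̂₂). Then x̂(t) = x(t) for every t ≥ τ. -/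
/-!
By the Sylvester equation `Tᵢ A - Mᵢ Tᵢ = Hᵢ C`, the observer error `wᵢ = vᵢ - Tᵢ x` solves
`ẇᵢ = Mᵢ wᵢ`. Hence the stacked vector `(vᵢ; C x) = [Tᵢ; C] x + (wᵢ; 0)` differs from
`[Tᵢ; C] x` by a solution `ε` of `ε̇ = M̂ᵢ ε`, and `ε(t) = exp(τ M̂ᵢ) ε(t - τ)` cancels in
`φ(t) - exp(τ M̂) φ(t - τ)`. After multiplying by `Uᵢ`, block `i` reads
`x(t) - Uᵢ exp(τ M̂ᵢ) Uᵢ⁻¹ x(t - τ)`, so the whole vector is `W (x(t); -x(t - τ))`, from which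
`D_c = [Iₙ 0] W⁻¹` extracts `x(t)`.
-/

open Matrix NormedSpace

section

variable {ι μ ν π : Type*} [Fintype ι] [Fintype μ] [Fintype ν] [Fintype π]

theorem HasDerivAt.matrix_mulVec (M : Matrix ν ι ℝ) {f : ℝ → ι → ℝ} {f' : ι → ℝ} {t : ℝ}
    (hf : HasDerivAt f f' t) : HasDerivAt (fun s => M *ᵥ f s) (M *ᵥ f') t :=
  (LinearMap.toContinuousLinearMap (mulVecLin M)).hasFDerivAt.comp_hasDerivAt t hf

omit [Fintype ι] [Fintype μ] [Fintype ν] [Fintype π] in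
theorem HasDerivAt.sumElim_zero_comp (e : ι ⊕ μ ≃ ν) {w : ℝ → ι → ℝ} {w' : ι → ℝ} {t : ℝ}
    (hw : HasDerivAt w w' t) :
    HasDerivAt (fun r => Sum.elim (w r) 0 ∘ e.symm) (Sum.elim w' 0 ∘ e.symm) t := by
  refine hasDerivAt_pi.2 fun k => ?_
  rcases hk : e.symm k with i | i <;>
    simp only [Function.comp_apply, hk, Sum.elim_inl, Sum.elim_inr]
  · exact hasDerivAt_pi.1 hw i
  · exact hasDerivAt_const t 0

namespace Matrix

section Exp

-- `exp` does not depend on the norm; this one only serves to apply the normed-algebra API.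
attribute [local instance] Matrix.linftyOpNormedRing Matrix.linftyOpNormedAlgebra

theorem exp_fromBlocks_zero [DecidableEq ι] [DecidableEq μ] (P : Matrix ι ι ℝ)
    (Q : Matrix μ μ ℝ) : exp (fromBlocks P 0 0 Q) = fromBlocks (exp P) 0 0 (exp Q) := by
  let g : Matrix ι ι ℝ × Matrix μ μ ℝ →+* Matrix (ι ⊕ μ) (ι ⊕ μ) ℝ :=
    { toFun := fun PQ => fromBlocks PQ.1 0 0 PQ.2
      map_one' := fromBlocks_one
      map_mul' := fun _ _ => by simp [fromBlocks_multiply]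
      map_zero' := fromBlocks_zero
      map_add' := fun _ _ => by simp [fromBlocks_add] }
  have hg : Continuous g :=
    continuous_fst.matrix_fromBlocks continuous_const continuous_const continuous_snd
  have h := (map_exp g hg (P, Q)).symm
  simp only [g, RingHom.coe_mk, MonoidHom.coe_mk, OneHom.coe_mk, Prod.fst_exp, Prod.snd_exp] at h
  exact h

theorem eq_exp_smul_mulVec_of_hasDerivAt [DecidableEq ι] (M : Matrix ι ι ℝ) {f : ℝ → ι → ℝ}
    {s t : ℝ} (hst : s ≤ t) (hf : ∀ r ∈ Set.Icc s t, HasDerivAt f (M *ᵥ f r) r) :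
    f t = exp ((t - s) • M) *ᵥ f s := by
  let L : Matrix ι ι ℝ →L[ℝ] ι → ℝ := LinearMap.toContinuousLinearMap
    { toFun := (· *ᵥ f s), map_add' := fun _ _ => add_mulVec _ _ _,
      map_smul' := fun _ _ => smul_mulVec _ _ _ }
  have hg : ∀ r, HasDerivAt (fun r => exp ((r - s) • M) *ᵥ f s)
      (M *ᵥ (exp ((r - s) • M) *ᵥ f s)) r := by
    intro r
    exact (L.hasFDerivAt.comp_hasDerivAt r
      ((hasDerivAt_exp_smul_const' (𝕂 := ℝ) M (r - s)).comp_sub_const r s)).congr_deriv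
      (mulVec_mulVec _ _ _).symm
  exact ODE_solution_unique (v := fun _ => (M *ᵥ ·))
    (fun _ => (LinearMap.toContinuousLinearMap (mulVecLin M)).lipschitz)
    (fun r hr => (hf r hr).continuousAt.continuousWithinAt)
    (fun r hr => (hf r (Set.Ico_subset_Icc_self hr)).hasDerivWithinAt)
    (fun r _ => (hg r).continuousAt.continuousWithinAt)
    (fun r _ => (hg r).hasDerivWithinAt) (by simp) (Set.right_mem_Icc.2 hst)

end Exp

section Blocks

variable {α : Type*}

omit [Fintype ι] [Fintype μ] in
theorem submatrix_fromRows_mulVec [Semiring α] (e : ι ⊕ μ ≃ ν)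
    (T : Matrix ι ν α) (C : Matrix μ ν α) (w : ν → α) :
    (fromRows T C).submatrix e.symm id *ᵥ w = Sum.elim (T *ᵥ w) (C *ᵥ w) ∘ e.symm := by
  rw [← fromRows_mulVec]
  rfl

theorem fromBlocks_zero_mulVec_sumElim [NonUnitalNonAssocSemiring α] (P : Matrix ι ι α)
    (Q : Matrix μ μ α) (a : ι → α) (b : μ → α) :
    fromBlocks P 0 0 Q *ᵥ Sum.elim a b = Sum.elim (P *ᵥ a) (Q *ᵥ b) := by
  simp [fromBlocks_mulVec]

theorem submatrix_fromBlocks_zero_mulVec [NonUnitalNonAssocSemiring α] (e : ι ⊕ μ ≃ ν)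
    (P : Matrix ι ι α) (Q : Matrix μ μ α) (w : ι → α) :
    (fromBlocks P 0 0 Q).submatrix e.symm e.symm *ᵥ (Sum.elim w 0 ∘ e.symm) =
      Sum.elim (P *ᵥ w) 0 ∘ e.symm := by
  rw [submatrix_mulVec_equiv, Equiv.symm_symm, Function.comp_assoc, e.symm_comp_self,
    Function.comp_id, fromBlocks_zero_mulVec_sumElim, mulVec_zero]

theorem fromCols_one_zero_mul_inv_mulVec_mulVec [CommRing α] [DecidableEq ν] [DecidableEq μ]
    {W : Matrix (ν ⊕ μ) (ν ⊕ μ) α} (hW : IsUnit W) (a : ν → α) (b : μ → α) :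
    (fromCols (1 : Matrix ν ν α) (0 : Matrix ν μ α) * W⁻¹) *ᵥ (W *ᵥ Sum.elim a b) = a := by
  rw [mulVec_mulVec, Matrix.mul_assoc, nonsing_inv_mul _ ((isUnit_iff_isUnit_det _).1 hW),
    Matrix.mul_one, fromCols_mulVec_sumElim, one_mulVec, zero_mulVec, add_zero]

end Blocks

end Matrix

section Observer

variable {A : Matrix ν ν ℝ} {B : Matrix ν π ℝ} {C : Matrix μ ν ℝ} {D : Matrix μ π ℝ}
  {M : Matrix ι ι ℝ} {H : Matrix ι μ ℝ} {T : Matrix ι ν ℝ}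
  {x : ℝ → ν → ℝ} {u : ℝ → π → ℝ} {v : ℝ → ι → ℝ}

theorem hasDerivAt_sub_mulVec_of_sylvester (hT : T * A - M * T = H * C) {t : ℝ}
    (hx : HasDerivAt x (A *ᵥ x t + B *ᵥ u t) t)
    (hv : HasDerivAt v (M *ᵥ v t + H *ᵥ (C *ᵥ x t + D *ᵥ u t) + (T * B - H * D) *ᵥ u t) t) :
    HasDerivAt (fun r => v r - T *ᵥ x r) (M *ᵥ (v t - T *ᵥ x t)) t := by
  refine (hv.sub (hx.matrix_mulVec T)).congr_deriv ?_
  simp only [mulVec_add, mulVec_sub, sub_mulVec, mulVec_mulVec, sub_eq_iff_eq_add.mp hT,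
    add_mulVec]
  abel

theorem mulVec_sub_exp_mulVec_of_observer [DecidableEq ν] (e : ι ⊕ μ ≃ ν) (Mb : Matrix μ μ ℝ)
    {U : Matrix ν ν ℝ} (hU : U * (fromRows T C).submatrix e.symm id = 1)
    (hT : T * A - M * T = H * C)
    (hx : ∀ r, 0 ≤ r → HasDerivAt x (A *ᵥ x r + B *ᵥ u r) r)
    (hv : ∀ r, 0 ≤ r → HasDerivAt v
      (M *ᵥ v r + H *ᵥ (C *ᵥ x r + D *ᵥ u r) + (T * B - H * D) *ᵥ u r) r)
    {τ t : ℝ} (hτ : 0 ≤ τ) (ht : τ ≤ t) :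
    U *ᵥ (Sum.elim (v t) (C *ᵥ x t) ∘ e.symm -
        exp (τ • (fromBlocks M 0 0 Mb).submatrix e.symm e.symm) *ᵥ
          (Sum.elim (v (t - τ)) (C *ᵥ x (t - τ)) ∘ e.symm)) =
      x t - (U * exp (τ • (fromBlocks M 0 0 Mb).submatrix e.symm e.symm) *
        (fromRows T C).submatrix e.symm id) *ᵥ x (t - τ) := by
  set TC := (fromRows T C).submatrix e.symm id
  set E := exp (τ • (fromBlocks M 0 0 Mb).submatrix e.symm e.symm)
  set ε : ℝ → ν → ℝ := fun r => Sum.elim (v r - T *ᵥ x r) 0 ∘ e.symm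
  have hsplit : ∀ r, Sum.elim (v r) (C *ᵥ x r) ∘ e.symm = TC *ᵥ x r + ε r := by
    intro r
    funext k
    rcases hk : e.symm k with i | i <;> simp [TC, ε, submatrix_fromRows_mulVec, hk]
  have hε_deriv : ∀ r, 0 ≤ r →
      HasDerivAt ε ((fromBlocks M 0 0 Mb).submatrix e.symm e.symm *ᵥ ε r) r := by
    intro r hr
    rw [submatrix_fromBlocks_zero_mulVec]
    exact (hasDerivAt_sub_mulVec_of_sylvester hT (hx r hr) (hv r hr)).sumElim_zero_comp e
  have hε : ε t = E *ᵥ ε (t - τ) := by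
    have h := eq_exp_smul_mulVec_of_hasDerivAt _ (sub_le_self t hτ)
      fun r hr => hε_deriv r (by linarith [hr.1])
    rwa [sub_sub_cancel] at h
  rw [hsplit, hsplit, hε, mulVec_add, add_sub_add_right_eq_sub, mulVec_sub, mulVec_mulVec, hU,
    one_mulVec, mulVec_mulVec, mulVec_mulVec]

end Observer

end

/-- Theorem 2: the minimal-order appointed-time observer
`x̂(t) = D_c · diag(U₁,U₂) · (φ(t) − exp(τ M̂) φ(t−τ))` satisfies `x̂(t) = x(t)` for all
`t ≥ τ`, where `φ = (v₁; y − Du; v₂; y − Du)`, the `vᵢ` are the minimal-order observer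
states, `Uᵢ = [Tᵢ; C]⁻¹`, `M̂ᵢ = diag(Mᵢ, M̄ᵢ)` and `D_c = [Iₙ 0] W⁻¹` for the assumed
invertible matrix `W = [[Iₙ, U₁ exp(τM̂₁) U₁⁻¹],[Iₙ, U₂ exp(τM̂₂) U₂⁻¹]]`. -/
theorem stmt16 {n m p : ℕ} (τ : ℝ) (hτ : 0 < τ)
    (A : Matrix (Fin n) (Fin n) ℝ) (B : Matrix (Fin n) (Fin p) ℝ)
    (C : Matrix (Fin m) (Fin n) ℝ) (D : Matrix (Fin m) (Fin p) ℝ)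
    (M1 M2 : Matrix (Fin (n - m)) (Fin (n - m)) ℝ)
    (Mb1 Mb2 : Matrix (Fin m) (Fin m) ℝ)
    (H1 H2 : Matrix (Fin (n - m)) (Fin m) ℝ)
    (T1 T2 : Matrix (Fin (n - m)) (Fin n) ℝ)
    (hSyl1 : T1 * A - M1 * T1 = H1 * C)
    (hSyl2 : T2 * A - M2 * T2 = H2 * C)
    (e : Fin (n - m) ⊕ Fin m ≃ Fin n)
    (TC1 TC2 : Matrix (Fin n) (Fin n) ℝ)
    (hTC1 : TC1 = (fromRows T1 C).submatrix e.symm id)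
    (hTC2 : TC2 = (fromRows T2 C).submatrix e.symm id)
    (hTC1inv : IsUnit TC1) (hTC2inv : IsUnit TC2)
    (U1 U2 : Matrix (Fin n) (Fin n) ℝ)
    (hU1 : U1 = TC1⁻¹) (hU2 : U2 = TC2⁻¹)
    (Mh1 Mh2 : Matrix (Fin n) (Fin n) ℝ)
    (hMh1 : Mh1 = (fromBlocks M1 0 0 Mb1).submatrix e.symm e.symm)
    (hMh2 : Mh2 = (fromBlocks M2 0 0 Mb2).submatrix e.symm e.symm)
    (W : Matrix (Fin n ⊕ Fin n) (Fin n ⊕ Fin n) ℝ)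
    (hW : W = fromBlocks 1 (U1 * NormedSpace.exp (τ • Mh1) * U1⁻¹)
                         1 (U2 * NormedSpace.exp (τ • Mh2) * U2⁻¹))
    (hWinv : IsUnit W)
    (Dc : Matrix (Fin n) (Fin n ⊕ Fin n) ℝ)
    (hDc : Dc = fromCols (1 : Matrix (Fin n) (Fin n) ℝ) 0 * W⁻¹)
    (x : ℝ → Fin n → ℝ) (u : ℝ → Fin p → ℝ) (v1 v2 : ℝ → Fin (n - m) → ℝ)
    (y : ℝ → Fin m → ℝ)
    (hy : ∀ t : ℝ, y t = C.mulVec (x t) + D.mulVec (u t))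
    (hx : ∀ t : ℝ, 0 ≤ t → HasDerivAt x (A.mulVec (x t) + B.mulVec (u t)) t)
    (hv1 : ∀ t : ℝ, 0 ≤ t → HasDerivAt v1
      (M1.mulVec (v1 t) + H1.mulVec (y t) + (T1 * B - H1 * D).mulVec (u t)) t)
    (hv2 : ∀ t : ℝ, 0 ≤ t → HasDerivAt v2
      (M2.mulVec (v2 t) + H2.mulVec (y t) + (T2 * B - H2 * D).mulVec (u t)) t)
    (φ : ℝ → (Fin n ⊕ Fin n) → ℝ)
    (hφ : ∀ t : ℝ, φ t =
      Sum.elim (Sum.elim (v1 t) (y t - D.mulVec (u t)) ∘ e.symm)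
               (Sum.elim (v2 t) (y t - D.mulVec (u t)) ∘ e.symm))
    (xhat : ℝ → Fin n → ℝ)
    (hxhat : ∀ t : ℝ, xhat t =
      Dc.mulVec ((fromBlocks U1 0 0 U2).mulVec
        (φ t - (NormedSpace.exp (τ • fromBlocks Mh1 0 0 Mh2)).mulVec (φ (t - τ))))) :
    ∀ t : ℝ, τ ≤ t → xhat t = x t := by
  intro t ht
  simp only [hy, add_sub_cancel_right] at hv1 hv2 hφ
  have hdet1 := (isUnit_iff_isUnit_det _).1 hTC1inv
  have hdet2 := (isUnit_iff_isUnit_det _).1 hTC2inv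
  have hUinv1 : U1⁻¹ = TC1 := hU1 ▸ nonsing_inv_nonsing_inv _ hdet1
  have hUinv2 : U2⁻¹ = TC2 := hU2 ▸ nonsing_inv_nonsing_inv _ hdet2
  have h1 := mulVec_sub_exp_mulVec_of_observer e Mb1 (U := U1)
    (by rw [← hTC1, hU1]; exact nonsing_inv_mul _ hdet1) hSyl1 hx hv1 hτ.le ht
  have h2 := mulVec_sub_exp_mulVec_of_observer e Mb2 (U := U2)
    (by rw [← hTC2, hU2]; exact nonsing_inv_mul _ hdet2) hSyl2 hx hv2 hτ.le ht
  rw [← hTC1, ← hMh1] at h1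
  rw [← hTC2, ← hMh2] at h2
  have hexp : exp (τ • fromBlocks Mh1 0 0 Mh2) =
      fromBlocks (exp (τ • Mh1)) 0 0 (exp (τ • Mh2)) := by
    rw [fromBlocks_smul, smul_zero, exp_fromBlocks_zero]
  have hWx : W *ᵥ Sum.elim (x t) (-x (t - τ)) =
      fromBlocks U1 0 0 U2 *ᵥ (φ t - exp (τ • fromBlocks Mh1 0 0 Mh2) *ᵥ φ (t - τ)) := by
    rw [hφ, hφ, hexp, fromBlocks_zero_mulVec_sumElim, ← Sum.elim_sub_sub,
      fromBlocks_zero_mulVec_sumElim, h1, h2, hW, hUinv1, hUinv2, fromBlocks_mulVec]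
    simp only [sub_eq_add_neg, Sum.elim_comp_inl, Sum.elim_comp_inr, one_mulVec, mulVec_neg]
  rw [hxhat, ← hWx, hDc]
  -- `hDc` multiplies through the `CStarMatrix` instance, which `exact` unfolds but `rw` does not.
  exact fromCols_one_zero_mul_inv_mulVec_mulVec hWinv _ _
end

section
/- Assume G Ē = 0. Let x : ℝ → ℝⁿ, u : ℝ → ℝᵖ, w : ℝ → ℝ^q, y : ℝ → ℝᵐ satisfy, for all t: x has derivative A x(t) + B u(t) + E w(t) at t, and y(t) = C x(t) + D u(t) + F w(t). Then η(t) := G x(t) satisfies, for all t: η has derivative G Ā η(t) + H y(t) + B̄ u(t) at t, and C̄ η(t) = Ĉ (y(t) − D u(t)), where Ā = A − E F⁺ C, B̂ = B − E F⁺ D, B̄ = G B̂ − G Ā Ē (C̄Ē)⁺ (I_m − F F⁺) D, H = G E F⁺ + G Ā Ē (C̄Ē)⁺ (I_m − F F⁺), and Ĉ = (I_m − C̄ Ē (C̄Ē)⁺)(I_m − F F⁺). Moreover x(t) = η(t) + Ē (C̄Ē)⁺ (I_m − F F⁺)(y(t) − D u(t)) for all t. -/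
open Matrix

/-!
Put `P = 1 - F F⁺`, so that `P F = 0`, and `z = y - D u`. Then `P z = C̄ x`, hence
`x = G x + Ē (C̄Ē)⁺ C̄ x = η + Ē (C̄Ē)⁺ P z` and `C̄ η = (1 - C̄ Ē (C̄Ē)⁺) C̄ x = Ĉ z`.
For the dynamics, `G Ē = 0` means `G E = G E F⁺ F`, so the unknown input enters `η̇ = G ẋ`
only through `F w = y - C x - D u`; this gives `η̇ = G Ā x + G B̂ u + G E F⁺ y`, and
substituting the reconstruction of `x` from `η` and `z` yields the stated system.
-/

section Algebra

variable {R : Type*} [Ring R] {k l m n p : Type*}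

theorem Matrix.one_sub_mul_mul_self_eq_zero [Fintype l] [Fintype m] [DecidableEq m]
    {F : Matrix m l R} {Fp : Matrix l m R} (hF : F * Fp * F = F) : (1 - F * Fp) * F = 0 := by
  rw [Matrix.sub_mul, Matrix.one_mul, hF, sub_self]

theorem Matrix.mul_one_sub_mul_eq_one_sub_mul_mul [Fintype m] [Fintype n]
    [DecidableEq m] [DecidableEq n]
    (K : Matrix n m R) (L : Matrix m n R) : L * (1 - K * L) = (1 - L * K) * L := by
  rw [Matrix.mul_sub, Matrix.sub_mul, Matrix.mul_one, Matrix.one_mul, Matrix.mul_assoc]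

theorem Matrix.one_sub_mul_mul_mulVec_eq_of_eq_add [Fintype l] [Fintype m] [Fintype n]
    [Fintype p] [DecidableEq m] {C : Matrix m n R}
    {D : Matrix m p R} {F : Matrix m l R} {Fp : Matrix l m R} (hF : F * Fp * F = F)
    {x : n → R} {u : p → R} {w : l → R} {y : m → R}
    (hy : y = C *ᵥ x + D *ᵥ u + F *ᵥ w) :
    ((1 - F * Fp) * C) *ᵥ x = (1 - F * Fp) *ᵥ (y - D *ᵥ u) := by
  rw [hy, add_sub_right_comm, add_sub_cancel_right, mulVec_add, mulVec_mulVec,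
    mulVec_mulVec, one_sub_mul_mul_self_eq_zero hF, zero_mulVec, add_zero]

theorem Matrix.mulVec_eliminate_input [Fintype l] [Fintype m] [Fintype n] [Fintype p]
    [DecidableEq l] {G : Matrix k n R}
    {A : Matrix n n R} {B : Matrix n p R} {C : Matrix m n R} {D : Matrix m p R}
    {E : Matrix n l R} {F : Matrix m l R} {Fp : Matrix l m R}
    (hGE : G * (E * (1 - Fp * F)) = 0)
    {x : n → R} {u : p → R} {w : l → R} {y : m → R}
    (hy : y = C *ᵥ x + D *ᵥ u + F *ᵥ w) :
    G *ᵥ (A *ᵥ x + B *ᵥ u + E *ᵥ w) =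
      (G * (A - E * Fp * C)) *ᵥ x + (G * (B - E * Fp * D)) *ᵥ u + (G * E * Fp) *ᵥ y := by
  have hE : G * E * Fp * F = G * E := by
    rwa [← Matrix.mul_assoc, Matrix.mul_sub, Matrix.mul_one, sub_eq_zero, eq_comm,
      ← Matrix.mul_assoc] at hGE
  rw [hy]
  simp only [Matrix.mul_sub, Matrix.sub_mulVec, mulVec_add, mulVec_mulVec, ← Matrix.mul_assoc,
    hE]
  abel

theorem Matrix.mulVec_substitute_state [Fintype m] [Fintype n] [Fintype p]
    {K : Matrix k n R} {L : Matrix k m R} {N : Matrix k p R} {M : Matrix n m R}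
    {D : Matrix m p R} {x η : n → R} {u : p → R} {y : m → R}
    (hx : x = η + M *ᵥ (y - D *ᵥ u)) :
    K *ᵥ x + N *ᵥ u + L *ᵥ y = K *ᵥ η + (L + K * M) *ᵥ y + (N - K * M * D) *ᵥ u := by
  rw [hx]
  simp only [mulVec_add, mulVec_sub, add_mulVec, sub_mulVec, mulVec_mulVec, Matrix.mul_assoc]
  abel

end Algebra

theorem HasDerivAt.matrix_mulVec_s17 {𝕜 : Type*} [NontriviallyNormedField 𝕜] {m n : Type*}
    [Fintype n] (M : Matrix m n 𝕜) {x : 𝕜 → n → 𝕜} {x' : n → 𝕜} {t : 𝕜}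
    (hx : HasDerivAt x x' t) : HasDerivAt (fun s => M *ᵥ x s) (M *ᵥ x') t :=
  hasDerivAt_pi.2 fun i =>
    HasDerivAt.fun_sum fun j _ => (hasDerivAt_pi.1 hx j).const_mul (M i j)

theorem stmt17_general {n m p q : ℕ}
    (A : Matrix (Fin n) (Fin n) ℝ) (B : Matrix (Fin n) (Fin p) ℝ)
    (C : Matrix (Fin m) (Fin n) ℝ) (D : Matrix (Fin m) (Fin p) ℝ)
    (E : Matrix (Fin n) (Fin q) ℝ) (F : Matrix (Fin m) (Fin q) ℝ)
    (Fp : Matrix (Fin q) (Fin m) ℝ)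
    (hFp1 : F * Fp * F = F)
    (Cbar : Matrix (Fin m) (Fin n) ℝ)
    (hCbar : Cbar = ((1 : Matrix (Fin m) (Fin m) ℝ) - F * Fp) * C)
    (Ebar : Matrix (Fin n) (Fin q) ℝ)
    (hEbar : Ebar = E * ((1 : Matrix (Fin q) (Fin q) ℝ) - Fp * F))
    (CEp : Matrix (Fin q) (Fin m) ℝ)
    (G : Matrix (Fin n) (Fin n) ℝ)
    (hG : G = (1 : Matrix (Fin n) (Fin n) ℝ) - Ebar * CEp * Cbar)
    (hGE : G * Ebar = 0)
    (Abar : Matrix (Fin n) (Fin n) ℝ) (hAbar : Abar = A - E * Fp * C)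
    (Bhat : Matrix (Fin n) (Fin p) ℝ) (hBhat : Bhat = B - E * Fp * D)
    (Bbar : Matrix (Fin n) (Fin p) ℝ)
    (hBbar : Bbar = G * Bhat -
      G * Abar * Ebar * CEp * (((1 : Matrix (Fin m) (Fin m) ℝ) - F * Fp) * D))
    (H : Matrix (Fin n) (Fin m) ℝ)
    (hH : H = G * E * Fp +
      G * Abar * Ebar * CEp * ((1 : Matrix (Fin m) (Fin m) ℝ) - F * Fp))
    (Chat : Matrix (Fin m) (Fin m) ℝ)
    (hChat : Chat = ((1 : Matrix (Fin m) (Fin m) ℝ) - Cbar * Ebar * CEp) *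
      ((1 : Matrix (Fin m) (Fin m) ℝ) - F * Fp))
    (x : ℝ → Fin n → ℝ) (u : ℝ → Fin p → ℝ) (w : ℝ → Fin q → ℝ) (y : ℝ → Fin m → ℝ)
    (hx : ∀ t : ℝ, HasDerivAt x
      (A.mulVec (x t) + B.mulVec (u t) + E.mulVec (w t)) t)
    (hy : ∀ t : ℝ, y t = C.mulVec (x t) + D.mulVec (u t) + F.mulVec (w t))
    (η : ℝ → Fin n → ℝ) (hη : ∀ t : ℝ, η t = G.mulVec (x t)) :
    (∀ t : ℝ, HasDerivAt η
        ((G * Abar).mulVec (η t) + H.mulVec (y t) + Bbar.mulVec (u t)) t) ∧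
    (∀ t : ℝ, Cbar.mulVec (η t) = Chat.mulVec (y t - D.mulVec (u t))) ∧
    (∀ t : ℝ, x t =
      η t + (Ebar * CEp * ((1 : Matrix (Fin m) (Fin m) ℝ) - F * Fp)).mulVec
        (y t - D.mulVec (u t))) := by
  have hCx : ∀ t, Cbar *ᵥ x t = (1 - F * Fp) *ᵥ (y t - D *ᵥ u t) := fun t => by
    rw [hCbar]; exact one_sub_mul_mul_mulVec_eq_of_eq_add hFp1 (hy t)
  have hrec : ∀ t, x t = η t + (Ebar * CEp * (1 - F * Fp)) *ᵥ (y t - D *ᵥ u t) := fun t => by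
    rw [hη t, hG, ← mulVec_mulVec, ← hCx t, sub_mulVec, one_mulVec, mulVec_mulVec,
      sub_add_cancel]
  refine ⟨fun t => ?_, fun t => ?_, hrec⟩
  · have hder := (hx t).matrix_mulVec_s17 G
    rw [← funext hη, mulVec_eliminate_input (hEbar ▸ hGE) (hy t),
      mulVec_substitute_state (hrec t), ← hAbar, ← hBhat] at hder
    rw [hH, hBbar]
    simpa only [Matrix.mul_assoc] using hder
  · rw [hη t, mulVec_mulVec, hG, mul_one_sub_mul_eq_one_sub_mul_mul, ← mulVec_mulVec, hCx t,
      mulVec_mulVec, hChat, Matrix.mul_assoc Cbar]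

/-- model reconfiguration. Under `G Ē = 0`, the variable `η(t) = G x(t)`
satisfies `η̇ = G Ā η + H y + B̄ u`, `C̄ η = Ĉ (y − D u)`, and
`x = η + Ē (C̄Ē)⁺ (I_m − F F⁺)(y − D u)`. -/
theorem stmt17 {n m p q : ℕ}
    (A : Matrix (Fin n) (Fin n) ℝ) (B : Matrix (Fin n) (Fin p) ℝ)
    (C : Matrix (Fin m) (Fin n) ℝ) (D : Matrix (Fin m) (Fin p) ℝ)
    (E : Matrix (Fin n) (Fin q) ℝ) (F : Matrix (Fin m) (Fin q) ℝ)
    (Fp : Matrix (Fin q) (Fin m) ℝ)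
    (hFp1 : F * Fp * F = F) (hFp2 : Fp * F * Fp = Fp)
    (Cbar : Matrix (Fin m) (Fin n) ℝ)
    (hCbar : Cbar = ((1 : Matrix (Fin m) (Fin m) ℝ) - F * Fp) * C)
    (Ebar : Matrix (Fin n) (Fin q) ℝ)
    (hEbar : Ebar = E * ((1 : Matrix (Fin q) (Fin q) ℝ) - Fp * F))
    (CEp : Matrix (Fin q) (Fin m) ℝ)
    (hCEp1 : (Cbar * Ebar) * CEp * (Cbar * Ebar) = Cbar * Ebar)
    (hCEp2 : CEp * (Cbar * Ebar) * CEp = CEp)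
    (G : Matrix (Fin n) (Fin n) ℝ)
    (hG : G = (1 : Matrix (Fin n) (Fin n) ℝ) - Ebar * CEp * Cbar)
    (hGE : G * Ebar = 0)
    (Abar : Matrix (Fin n) (Fin n) ℝ) (hAbar : Abar = A - E * Fp * C)
    (Bhat : Matrix (Fin n) (Fin p) ℝ) (hBhat : Bhat = B - E * Fp * D)
    (Bbar : Matrix (Fin n) (Fin p) ℝ)
    (hBbar : Bbar = G * Bhat -
      G * Abar * Ebar * CEp * (((1 : Matrix (Fin m) (Fin m) ℝ) - F * Fp) * D))
    (H : Matrix (Fin n) (Fin m) ℝ)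
    (hH : H = G * E * Fp +
      G * Abar * Ebar * CEp * ((1 : Matrix (Fin m) (Fin m) ℝ) - F * Fp))
    (Chat : Matrix (Fin m) (Fin m) ℝ)
    (hChat : Chat = ((1 : Matrix (Fin m) (Fin m) ℝ) - Cbar * Ebar * CEp) *
      ((1 : Matrix (Fin m) (Fin m) ℝ) - F * Fp))
    (x : ℝ → Fin n → ℝ) (u : ℝ → Fin p → ℝ) (w : ℝ → Fin q → ℝ) (y : ℝ → Fin m → ℝ)
    (hx : ∀ t : ℝ, HasDerivAt x
      (A.mulVec (x t) + B.mulVec (u t) + E.mulVec (w t)) t)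
    (hy : ∀ t : ℝ, y t = C.mulVec (x t) + D.mulVec (u t) + F.mulVec (w t))
    (η : ℝ → Fin n → ℝ) (hη : ∀ t : ℝ, η t = G.mulVec (x t)) :
    (∀ t : ℝ, HasDerivAt η
        ((G * Abar).mulVec (η t) + H.mulVec (y t) + Bbar.mulVec (u t)) t) ∧
    (∀ t : ℝ, Cbar.mulVec (η t) = Chat.mulVec (y t - D.mulVec (u t))) ∧
    (∀ t : ℝ, x t =
      η t + (Ebar * CEp * ((1 : Matrix (Fin m) (Fin m) ℝ) - F * Fp)).mulVec
        (y t - D.mulVec (u t))) :=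
  stmt17_general A B C D E F Fp hFp1 Cbar hCbar Ebar hEbar CEp G hG hGE Abar hAbar Bhat hBhat Bbar
    hBbar H hH Chat hChat x u w y hx hy η hη
end
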